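/- arXiv:2302.05575 — 6 statements merged into one kernel-verified Lean document; each statement's English description precedes it below -/
import Mathlib

section
/- Let C be a small adhesively cocomplete category. Call a presieve on an object c a *subobject covering* if all its members are monomorphisms and every monomorphism m : u ⟶ c through which all its members factor is an isomorphism. Let F : C^op ⥤ Type be a presheaf satisfying the sheaf condition (unique amalgamation of compatible families) for every sieve generated by a subobject covering. Then F satisfies the sheaf condition for every sieve generated by the set of legs of a colimit cocone of a monic C-valued structured decomposition, whenever all of these legs are monomorphisms. -/
open CategoryTheory Limits

universe w v u

/-- The objects of the category `∫G` associated to a simple graph `G`: the vertices and the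
edges of `G`. -/
inductive GObj {V : Type} (G : SimpleGraph V) : Type
  | vert : V → GObj G
  | edge : (e : Sym2 V) → e ∈ G.edgeSet → GObj G

/-- `∫G` is a thin category: besides identities, there is exactly one morphism `e ⟶ x` for
each endpoint `x` of each edge `e`.  We realise it as the category of a preorder. -/
instance GObj.instPreorder {V : Type} (G : SimpleGraph V) : Preorder (GObj G) where
  le x y :=
    match x, y with
    | .vert v, .vert w => v = w
    | .edge e _, .vert v => v ∈ e
    | .edge e _, .edge e' _ => e = e'
    | .vert _, .edge _ _ => False
  le_refl x := by cases x <;> rfl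
  le_trans x y z hxy hyz := by
    cases x <;> cases y <;> cases z <;> dsimp at * <;> first
      | exact hxy.trans hyz
      | (subst hyz; exact hxy)
      | (subst hxy; exact hyz)

/-- A submonic diagram in `C`: a diagram of shape a finite category all of whose morphisms
are monic, sending every morphism to a monomorphism of `C`. -/
structure SubmonicDiagram (C : Type u) [Category.{v} C] where
  J : Type
  [instCat : SmallCategory J]
  [instFin : FinCategory J]
  monoShape : ∀ {a b : J} (m : a ⟶ b), Mono m
  d : J ⥤ C
  monoMap : ∀ {a b : J} (m : a ⟶ b), Mono (d.map m)

attribute [instance] SubmonicDiagram.instCat SubmonicDiagram.instFin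

/-- A subobject covering of `c`: a presieve all of whose members are monomorphisms, such
that any monomorphism into `c` through which all members factor is an isomorphism (the
members are jointly maximal: their union is all of `c`). -/
def IsSubobjectCover {C : Type u} [Category.{v} C] {c : C} (S : Presieve c) : Prop :=
  (∀ ⦃Y : C⦄ (g : Y ⟶ c), S g → Mono g) ∧
  (∀ ⦃u : C⦄ (m : u ⟶ c), Mono m →
    (∀ ⦃Y : C⦄ (g : Y ⟶ c), S g → ∃ h : Y ⟶ u, h ≫ m = g) → IsIso m)

/-!
The legs of a colimit cocone form a subobject covering of its apex as soon as they are monic: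
if every leg factors through a monomorphism `m`, the factorisations form a cocone (naturality
can be checked after composing with the monic `m`), and the induced map out of the colimit is
a section of `m`. So the sheaf condition for such sieves is an instance of the hypothesis.
-/

namespace CategoryTheory.Limits.IsColimit

variable {C : Type u} [Category.{v} C] {J : Type*} [Category J] {D : J ⥤ C} {s : Cocone D}

theorem isIso_of_mono_of_forall_fac (hs : IsColimit s) {u : C} (m : u ⟶ s.pt) [Mono m]
    (h : ∀ j, D.obj j ⟶ u) (hh : ∀ j, h j ≫ m = s.ι.app j) : IsIso m := by
  let t : Cocone D :=
    { pt := u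
      ι := { app := h, naturality := fun a b f => by rw [← cancel_mono m]; simp [hh] } }
  have : IsSplitEpi m := ⟨⟨hs.desc t, hs.hom_ext fun j => by simp [t, hh]⟩⟩
  exact isIso_of_mono_of_isSplitEpi m

theorem isSubobjectCover_ofArrows (hs : IsColimit s) (hlegs : ∀ j, Mono (s.ι.app j)) :
    IsSubobjectCover (Presieve.ofArrows D.obj s.ι.app) := by
  refine ⟨fun _ _ ⟨j⟩ => hlegs j, fun u m _ hfac => ?_⟩
  choose h hh using fun j => hfac (s.ι.app j) (Presieve.ofArrows.mk j)
  exact hs.isIso_of_mono_of_forall_fac m h hh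

end CategoryTheory.Limits.IsColimit

theorem stmt_6_general (C : Type u) [SmallCategory C]
    (F : Cᵒᵖ ⥤ Type w)
    (hF : ∀ (c : C) (S : Presieve c), IsSubobjectCover S →
      Presieve.IsSheafFor F (Sieve.generate S).arrows)
    (c : C) (V : Type) (G : SimpleGraph V) (d : GObj G ⥤ C)
    (ι : d ⟶ (Functor.const (GObj G)).obj c)
    (hcolimit : Nonempty (IsColimit (Cocone.mk c ι)))
    (hlegs : ∀ j : GObj G, Mono (ι.app j)) :
    Presieve.IsSheafFor F
      (Sieve.generate (Presieve.ofArrows d.obj fun j => ι.app j)).arrows :=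
  hF c _ (hcolimit.some.isSubobjectCover_ofArrows hlegs)

/-- In a small adhesively cocomplete category, a presheaf of types satisfying
the sheaf condition for every sieve generated by a subobject covering also satisfies the
sheaf condition for every sieve generated by the legs of a colimit cocone of a monic
structured decomposition, provided all these legs are monomorphisms. -/
theorem stmt_6 (C : Type u) [SmallCategory C] [Adhesive C] [HasPullbacks C]
    (hcolim : ∀ D : SubmonicDiagram C, HasColimit D.d)
    (F : Cᵒᵖ ⥤ Type w)
    (hF : ∀ (c : C) (S : Presieve c), IsSubobjectCover S →
      Presieve.IsSheafFor F (Sieve.generate S).arrows)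
    (c : C) (V : Type) [Fintype V] (G : SimpleGraph V) (d : GObj G ⥤ C)
    (hd : ∀ {a b : GObj G} (m : a ⟶ b), Mono (d.map m))
    (ι : d ⟶ (Functor.const (GObj G)).obj c)
    (hcolimit : Nonempty (IsColimit (Cocone.mk c ι)))
    (hlegs : ∀ j : GObj G, Mono (ι.app j)) :
    Presieve.IsSheafFor F
      (Sieve.generate (Presieve.ofArrows d.obj fun j => ι.app j)).arrows :=
  stmt_6_general C F hF c V G d ι hcolimit hlegs
end

section
/- Let G be a finite tree, let e* be an edge of G with endpoints x₁ and x₂, and let T₁ and T₂ be the two connected components of G with the edge e* deleted, containing x₁ and x₂ respectively. Consider a decomposition system over G, and let M, M₁ and M₂ denote the sets of compatible families of the system over G, of its restriction to T₁, and of its restriction to T₂, respectively. Then the restriction map M → M₁ × M₂ is injective with image exactly {(s¹, s²) | f x₁ e* (s¹ x₁) = f x₂ e* (s² x₂)}; that is, M is a pullback of the maps M₁ → A e* and M₂ → A e* given by s¹ ↦ f x₁ e* (s¹ x₁) and s² ↦ f x₂ e* (s² x₂). -/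
/-!
In a tree the edge `e* = s(x₁, x₂)` is a bridge, so the components `V₁ ∋ x₁` and `V₂ ∋ x₂` of
`G - e*` are disjoint, and by connectedness of `G` they cover all vertices. Hence a family over
`G` is determined by its two restrictions, and conversely two compatible families over `V₁` and
`V₂` glue to a family over `G`: every edge of `G` other than `e*` lies inside `V₁` or inside `V₂`,
so the only new compatibility condition is the one at `e*`.
-/

universe u

/-- A decomposition system over a graph `G`: a bag `B v` for each vertex, an adhesion `A e`
for each edge, and for each edge `e` and endpoint `x ∈ e` a map `f x e : B x → A e`. -/
structure DecompSystem {V : Type u} (G : SimpleGraph V) where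
  B : V → Type u
  A : Sym2 V → Type u
  f : ∀ (x : V) (e : Sym2 V), e ∈ G.edgeSet → x ∈ e → B x → A e

/-- A compatible family: for every edge with endpoints `x` and `y`, the images of the chosen
sections under the two adhesion maps agree. -/
def DecompSystem.Compatible {V : Type u} {G : SimpleGraph V} (D : DecompSystem G)
    (s : ∀ v, D.B v) : Prop :=
  ∀ ⦃x y : V⦄ (h : G.Adj x y),
    D.f x s(x, y) ((G.mem_edgeSet).mpr h) (Sym2.mem_mk_left x y) (s x) =
    D.f y s(x, y) ((G.mem_edgeSet).mpr h) (Sym2.mem_mk_right x y) (s y)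

/-- The set `M` of compatible families of the system. -/
def Fams {V : Type u} {G : SimpleGraph V} (D : DecompSystem G) : Type u :=
  {s : ∀ v, D.B v // D.Compatible s}

/-- Compatible families of the restriction of the system to the subgraph of `H ≤ G` induced
on a vertex set `U`. -/
def RFams {V : Type u} {G H : SimpleGraph V} (hH : H ≤ G) (D : DecompSystem G)
    (U : Set V) : Type u :=
  {s : ∀ v : U, D.B v // ∀ (a b : U) (h : H.Adj a b),
    D.f a s(a.1, b.1) ((G.mem_edgeSet).mpr (hH h)) (Sym2.mem_mk_left a.1 b.1) (s a) =
    D.f b s(a.1, b.1) ((G.mem_edgeSet).mpr (hH h)) (Sym2.mem_mk_right a.1 b.1) (s b)}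

/-- The restriction map from compatible families over `G` to compatible families of the
restricted system. -/
def restrictFam {V : Type u} {G H : SimpleGraph V} (hH : H ≤ G) (D : DecompSystem G)
    (U : Set V) (s : Fams D) : RFams hH D U :=
  ⟨fun v => s.1 v.1, fun a b h => s.2 (hH h)⟩

namespace SimpleGraph

variable {V : Type u} {G : SimpleGraph V} {x y : V}

theorem Connected.mem_supp_deleteEdges_or (hconn : G.Connected) (v : V) :
    v ∈ ((G.deleteEdges {s(x, y)}).connectedComponentMk x).supp ∨
      v ∈ ((G.deleteEdges {s(x, y)}).connectedComponentMk y).supp := by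
  set P : V → Prop := fun v => v ∈ ((G.deleteEdges {s(x, y)}).connectedComponentMk x).supp ∨
      v ∈ ((G.deleteEdges {s(x, y)}).connectedComponentMk y).supp
  have propagate {a b : V} (w : G.Walk a b) (hb : P b) : P a := by
    induction w with
    | nil => exact hb
    | @cons u c _ huc _ ih =>
      by_cases he : s(u, c) = s(x, y)
      · rcases Sym2.eq_iff.1 he with ⟨rfl, -⟩ | ⟨rfl, -⟩
        · exact Or.inl rfl
        · exact Or.inr rfl
      · have hcu : (G.deleteEdges {s(x, y)}).Adj c u := by
          simpa [Sym2.eq_swap, he] using huc.symm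
        exact (ih hb).imp (ConnectedComponent.mem_supp_of_adj_mem_supp _ · hcu)
          (ConnectedComponent.mem_supp_of_adj_mem_supp _ · hcu)
  exact propagate (hconn v x).some (Or.inl rfl)

theorem Adj.deleteEdges_adj_or_eq {a b : V} {e : Sym2 V} (h : G.Adj a b) :
    (G.deleteEdges {e}).Adj a b ∨ s(a, b) = e := by
  by_cases he : s(a, b) = e <;> simp [h, he]

theorem IsBridge.disjoint_supp_deleteEdges (hb : G.IsBridge s(x, y)) :
    Disjoint ((G.deleteEdges {s(x, y)}).connectedComponentMk x).supp
      ((G.deleteEdges {s(x, y)}).connectedComponentMk y).supp :=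
  pairwise_disjoint_supp_connectedComponent _ fun h => hb (ConnectedComponent.exact h)

end SimpleGraph

namespace DecompSystem

variable {V : Type u} {G : SimpleGraph V} (D : DecompSystem G)

theorem f_swap {x y : V} (hxy : G.Adj x y) {u : D.B x} {w : D.B y}
    (h : D.f x s(x, y) (G.mem_edgeSet.mpr hxy) (Sym2.mem_mk_left x y) u =
      D.f y s(x, y) (G.mem_edgeSet.mpr hxy) (Sym2.mem_mk_right x y) w) :
    D.f y s(y, x) (G.mem_edgeSet.mpr hxy.symm) (Sym2.mem_mk_left y x) w =
      D.f x s(y, x) (G.mem_edgeSet.mpr hxy.symm) (Sym2.mem_mk_right y x) u := by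
  have key : ∀ e (he : e ∈ G.edgeSet) (hx : x ∈ e) (hy : y ∈ e), e = s(x, y) →
      D.f x e he hx u = D.f y e he hy w := by
    rintro e he hx hy rfl
    exact h
  exact (key _ _ _ _ Sym2.eq_swap).symm

end DecompSystem

section Gluing

variable {V : Type u} {G H : SimpleGraph V} {D : DecompSystem G} (hH : H ≤ G) {U₁ U₂ : Set V}

theorem restrictFam_prod_injective (hcover : ∀ v, v ∈ U₁ ∨ v ∈ U₂) :
    Function.Injective (fun s : Fams D => (restrictFam hH D U₁ s, restrictFam hH D U₂ s)) := by
  intro s t hst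
  obtain ⟨h₁, h₂⟩ := Prod.mk.inj hst
  refine Subtype.ext (funext fun v => ?_)
  rcases hcover v with hv | hv
  · exact congrFun (congrArg Subtype.val h₁) ⟨v, hv⟩
  · exact congrFun (congrArg Subtype.val h₂) ⟨v, hv⟩

open Classical in
noncomputable def glueFam (hcover : ∀ v, v ∈ U₁ ∨ v ∈ U₂) (p : RFams hH D U₁ × RFams hH D U₂)
    (v : V) : D.B v :=
  if h : v ∈ U₁ then p.1.1 ⟨v, h⟩ else p.2.1 ⟨v, (hcover v).resolve_left h⟩

variable {hH} {hcover : ∀ v, v ∈ U₁ ∨ v ∈ U₂} {p : RFams hH D U₁ × RFams hH D U₂} {v : V}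

theorem glueFam_of_mem_left (hv : v ∈ U₁) : glueFam hH hcover p v = p.1.1 ⟨v, hv⟩ := by
  rw [glueFam, dif_pos hv]

theorem glueFam_of_mem_right (hdisj : Disjoint U₁ U₂) (hv : v ∈ U₂) :
    glueFam hH hcover p v = p.2.1 ⟨v, hv⟩ := by
  rw [glueFam, dif_neg (Set.disjoint_right.1 hdisj hv)]

theorem compatible_glueFam {x₁ x₂ : V} (hadj : G.Adj x₁ x₂) (h₁ : x₁ ∈ U₁) (h₂ : x₂ ∈ U₂)
    (hdisj : Disjoint U₁ U₂) (hU₁ : ∀ ⦃a b⦄, H.Adj a b → a ∈ U₁ → b ∈ U₁)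
    (hU₂ : ∀ ⦃a b⦄, H.Adj a b → a ∈ U₂ → b ∈ U₂)
    (hG : ∀ ⦃a b⦄, G.Adj a b → H.Adj a b ∨ s(a, b) = s(x₁, x₂))
    (hp : D.f x₁ s(x₁, x₂) (G.mem_edgeSet.mpr hadj) (Sym2.mem_mk_left x₁ x₂) (p.1.1 ⟨x₁, h₁⟩) =
      D.f x₂ s(x₁, x₂) (G.mem_edgeSet.mpr hadj) (Sym2.mem_mk_right x₁ x₂) (p.2.1 ⟨x₂, h₂⟩)) :
    D.Compatible (glueFam hH hcover p) := by
  intro a b hab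
  rcases hG hab with hHab | he
  · rcases hcover a with ha | ha
    · rw [glueFam_of_mem_left ha, glueFam_of_mem_left (hU₁ hHab ha)]
      exact p.1.2 ⟨a, ha⟩ ⟨b, _⟩ hHab
    · rw [glueFam_of_mem_right hdisj ha, glueFam_of_mem_right hdisj (hU₂ hHab ha)]
      exact p.2.2 ⟨a, ha⟩ ⟨b, _⟩ hHab
  · rcases Sym2.eq_iff.1 he with ⟨rfl, rfl⟩ | ⟨rfl, rfl⟩
    · rw [glueFam_of_mem_left h₁, glueFam_of_mem_right hdisj h₂]
      exact hp
    · rw [glueFam_of_mem_right hdisj h₂, glueFam_of_mem_left h₁]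
      exact D.f_swap hadj hp

theorem range_restrictFam_prod {x₁ x₂ : V} (hadj : G.Adj x₁ x₂) (h₁ : x₁ ∈ U₁) (h₂ : x₂ ∈ U₂)
    (hcover : ∀ v, v ∈ U₁ ∨ v ∈ U₂) (hdisj : Disjoint U₁ U₂)
    (hU₁ : ∀ ⦃a b⦄, H.Adj a b → a ∈ U₁ → b ∈ U₁) (hU₂ : ∀ ⦃a b⦄, H.Adj a b → a ∈ U₂ → b ∈ U₂)
    (hG : ∀ ⦃a b⦄, G.Adj a b → H.Adj a b ∨ s(a, b) = s(x₁, x₂)) :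
    Set.range (fun s : Fams D => (restrictFam hH D U₁ s, restrictFam hH D U₂ s)) =
      {p : RFams hH D U₁ × RFams hH D U₂ |
        D.f x₁ s(x₁, x₂) (G.mem_edgeSet.mpr hadj) (Sym2.mem_mk_left x₁ x₂) (p.1.1 ⟨x₁, h₁⟩) =
        D.f x₂ s(x₁, x₂) (G.mem_edgeSet.mpr hadj) (Sym2.mem_mk_right x₁ x₂) (p.2.1 ⟨x₂, h₂⟩)} := by
  ext p
  constructor
  · rintro ⟨s, rfl⟩
    exact s.2 hadj
  · intro hp
    refine ⟨⟨glueFam hH hcover p, compatible_glueFam hadj h₁ h₂ hdisj hU₁ hU₂ hG hp⟩,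
      Prod.ext ?_ ?_⟩
    · exact Subtype.ext (funext fun v => glueFam_of_mem_left (hcover := hcover) v.2)
    · exact Subtype.ext (funext fun v => glueFam_of_mem_right (hcover := hcover) hdisj v.2)

end Gluing

theorem stmt_8_general {V : Type u} {G : SimpleGraph V}
    (hconn : G.Connected) (hacyc : G.IsAcyclic)
    (x₁ x₂ : V) (hadj : G.Adj x₁ x₂) (D : DecompSystem G)
    (G' : SimpleGraph V) (hG'def : G' = G.deleteEdges {s(x₁, x₂)}) (hle : G' ≤ G)
    (V₁ V₂ : Set V)
    (hV₁ : V₁ = (G'.connectedComponentMk x₁).supp)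
    (hV₂ : V₂ = (G'.connectedComponentMk x₂).supp)
    (h₁ : x₁ ∈ V₁) (h₂ : x₂ ∈ V₂) :
    Function.Injective (fun s : Fams D => (restrictFam hle D V₁ s, restrictFam hle D V₂ s)) ∧
    Set.range (fun s : Fams D => (restrictFam hle D V₁ s, restrictFam hle D V₂ s)) =
      {p : RFams hle D V₁ × RFams hle D V₂ |
        D.f x₁ s(x₁, x₂) ((G.mem_edgeSet).mpr hadj) (Sym2.mem_mk_left x₁ x₂)
            (p.1.1 ⟨x₁, h₁⟩) =
        D.f x₂ s(x₁, x₂) ((G.mem_edgeSet).mpr hadj) (Sym2.mem_mk_right x₁ x₂)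
            (p.2.1 ⟨x₂, h₂⟩)} := by
  subst hG'def hV₁ hV₂
  have hcover := hconn.mem_supp_deleteEdges_or (x := x₁) (y := x₂)
  have hdisj :=
    (SimpleGraph.isAcyclic_iff_forall_adj_isBridge.mp hacyc hadj).disjoint_supp_deleteEdges
  have hclosed (C : (G.deleteEdges {s(x₁, x₂)}).ConnectedComponent) :
      ∀ ⦃a b⦄, (G.deleteEdges {s(x₁, x₂)}).Adj a b → a ∈ C.supp → b ∈ C.supp :=
    fun _ _ hab ha => C.mem_supp_of_adj_mem_supp ha hab
  exact ⟨restrictFam_prod_injective hle hcover,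
    range_restrictFam_prod hadj h₁ h₂ hcover hdisj (hclosed _) (hclosed _)
      fun _ _ hab => hab.deleteEdges_adj_or_eq⟩

/-- For a finite tree `G`, an edge `e* = s(x₁, x₂)`, and the two connected
components `V₁ ∋ x₁`, `V₂ ∋ x₂` of `G - e*`, the restriction map `M → M₁ × M₂` on compatible
families of a decomposition system is injective, with image exactly the pairs whose sections
at `x₁` and `x₂` are matched in the adhesion `A e*`; i.e. `M` is the pullback of
`M₁ → A e* ← M₂`. -/
theorem stmt_8 {V : Type u} [Fintype V] {G : SimpleGraph V}
    (hconn : G.Connected) (hacyc : G.IsAcyclic)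
    (x₁ x₂ : V) (hadj : G.Adj x₁ x₂) (D : DecompSystem G)
    (G' : SimpleGraph V) (hG'def : G' = G.deleteEdges {s(x₁, x₂)}) (hle : G' ≤ G)
    (V₁ V₂ : Set V)
    (hV₁ : V₁ = (G'.connectedComponentMk x₁).supp)
    (hV₂ : V₂ = (G'.connectedComponentMk x₂).supp)
    (h₁ : x₁ ∈ V₁) (h₂ : x₂ ∈ V₂) :
    Function.Injective (fun s : Fams D => (restrictFam hle D V₁ s, restrictFam hle D V₂ s)) ∧
    Set.range (fun s : Fams D => (restrictFam hle D V₁ s, restrictFam hle D V₂ s)) =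
      {p : RFams hle D V₁ × RFams hle D V₂ |
        D.f x₁ s(x₁, x₂) ((G.mem_edgeSet).mpr hadj) (Sym2.mem_mk_left x₁ x₂)
            (p.1.1 ⟨x₁, h₁⟩) =
        D.f x₂ s(x₁, x₂) ((G.mem_edgeSet).mpr hadj) (Sym2.mem_mk_right x₁ x₂)
            (p.2.1 ⟨x₂, h₂⟩)} :=
  stmt_8_general hconn hacyc x₁ x₂ hadj D G' hG'def hle V₁ V₂ hV₁ hV₂ h₁ h₂
end

section
/- Let G be a finite tree rooted at a vertex r, and consider a decomposition system over G. Define the *edge filter* at an edge e with endpoints x and y to be the operation replacing the current bag B x by {s ∈ B x | ∃ t ∈ B y, f x e s = f y e t} and the current bag B y by {t ∈ B y | ∃ s ∈ B x, f x e s = f y e t}, leaving all other bags unchanged. Process every edge of G exactly once, in any order in which each edge is processed only after all edges lying strictly below it (i.e., all edges of the subtree hanging from its endpoint farther from r) have been processed, applying each filter to the current bags. Then the resulting final bag B* r at the root equals {b ∈ B r | there exists a compatible family s of the original system with s r = b}; in particular, the original system has a compatible family if and only if B* r is nonempty. -/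
/-!
Filtering bottom-up leaves the bags directionally arc consistent: filtering the edge `pc`
gives every section at `p` a partner at `c`, and the bag at `c` is never touched again,
because every edge below `c` has already been filtered. On a tree this suffices to extend a
section surviving at the root, level by level, to a compatible family: each vertex picks a
partner of the section at its unique parent. Conversely, a compatible family passes every
filter.
-/

universe u

/-- The edge filter at the edge `xy`: the current bag at `x` is cut down to those sections
having a matching partner in the current bag at `y`, and vice versa; all other bags are
unchanged. -/
def filterStep {V : Type u} {G : SimpleGraph V} (D : DecompSystem G) (x y : V)
    (P : ∀ v, Set (D.B v)) : ∀ v, Set (D.B v) := fun v =>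
  {s | s ∈ P v ∧
    (∀ (hv : v = x) (h : G.Adj x y), ∃ t ∈ P y,
      D.f x s(x, y) ((G.mem_edgeSet).mpr h) (Sym2.mem_mk_left x y) (hv ▸ s) =
      D.f y s(x, y) ((G.mem_edgeSet).mpr h) (Sym2.mem_mk_right x y) t) ∧
    (∀ (hv : v = y) (h : G.Adj x y), ∃ t ∈ P x,
      D.f x s(x, y) ((G.mem_edgeSet).mpr h) (Sym2.mem_mk_left x y) t =
      D.f y s(x, y) ((G.mem_edgeSet).mpr h) (Sym2.mem_mk_right x y) (hv ▸ s))}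

namespace SimpleGraph

variable {V : Type u} {G : SimpleGraph V} {r p p' c : V}

structure IsParent (G : SimpleGraph V) (r p c : V) : Prop where
  adj : G.Adj p c
  dist_eq : G.dist r c = G.dist r p + 1

lemma exists_isParent (h : G.dist r c ≠ 0) : ∃ p, G.IsParent r p c := by
  obtain ⟨w, hw⟩ := exists_walk_of_dist_ne_zero (G := G) (u := c) (v := r)
    (by rwa [dist_comm])
  cases w with
  | nil => exact absurd dist_self h
  | @cons _ p _ hcp q =>
    refine ⟨p, hcp.symm, ?_⟩
    have hq : G.dist p r ≤ q.length := dist_le q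
    have htri : G.dist r c ≤ G.dist r p + G.dist p c :=
      hcp.symm.reachable.dist_triangle_right r
    simp only [Walk.length_cons, dist_comm (u := c), dist_comm (u := p)] at hw hq
    simp only [dist_eq_one_iff_adj.mpr hcp.symm] at htri
    omega

lemma IsParent.mem_support_of_isPath (hG : G.IsAcyclic) (hpc : G.IsParent r p c)
    {P : G.Walk r c} (hP : P.IsPath) : p ∈ P.support := by
  classical
  obtain ⟨q, hq, hql⟩ := (P.reachable.trans hpc.adj.symm.reachable).exists_path_of_dist
  refine hG.mem_support_of_ne_mem_support_of_adj_of_isPath hP hq hpc.adj.symm fun hc => ?_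
  have := (dist_le (q.takeUntil c hc)).trans (q.length_takeUntil_le_length hc)
  have := hpc.dist_eq
  omega

lemma IsParent.unique (hG : G.IsAcyclic) (hp : G.IsParent r p c) (hp' : G.IsParent r p' c) :
    p = p' := by
  have hr : G.Reachable r c := .of_dist_ne_zero (by rw [hp.dist_eq]; omega)
  obtain ⟨P, hP, -⟩ := hr.exists_path_of_dist
  rw [hG.eq_penultimate_of_adj_end hP hp.adj.symm (hp.mem_support_of_isPath hG hP),
    hG.eq_penultimate_of_adj_end hP hp'.adj.symm (hp'.mem_support_of_isPath hG hP)]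

lemma IsAcyclic.isParent_or_isParent (hG : G.IsAcyclic) (hr : G.Reachable r p) (h : G.Adj p c) :
    G.IsParent r p c ∨ G.IsParent r c p := by
  rcases hG.dist_eq_dist_add_one_of_adj_of_reachable r h hr with hd | hd
  · exact .inr ⟨h.symm, hd⟩
  · exact .inl ⟨h, hd⟩

end SimpleGraph

namespace DecompSystem

variable {V : Type u} {G : SimpleGraph V} (D : DecompSystem G)

def Agree {x y : V} (h : G.Adj x y) (a : D.B x) (b : D.B y) : Prop :=
  D.f x s(x, y) (G.mem_edgeSet.mpr h) (Sym2.mem_mk_left x y) a =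
    D.f y s(x, y) (G.mem_edgeSet.mpr h) (Sym2.mem_mk_right x y) b

def IsDirArcConsistent (r : V) (P : ∀ v, Set (D.B v)) : Prop :=
  ∀ ⦃p c : V⦄ (h : G.IsParent r p c), ∀ a ∈ P p, ∃ b ∈ P c, D.Agree h.adj a b

variable {D}

lemma Agree.symm {x y : V} {h : G.Adj x y} {a : D.B x} {b : D.B y} (hab : D.Agree h a b) :
    D.Agree h.symm b a := by
  have key : ∀ e (he : e ∈ G.edgeSet) (hx : x ∈ e) (hy : y ∈ e), e = s(x, y) →
      D.f y e he hy b = D.f x e he hx a := by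
    rintro e he hx hy rfl
    exact Eq.symm hab
  exact key _ _ _ _ Sym2.eq_swap

variable {r : V} {P : ∀ v, Set (D.B v)}

lemma IsDirArcConsistent.nonempty (hconn : G.Connected) (hP : D.IsDirArcConsistent r P)
    {a : D.B r} (ha : a ∈ P r) (v : V) : (P v).Nonempty := by
  induction hv : G.dist r v generalizing v with
  | zero => rw [hconn.dist_eq_zero_iff] at hv; exact hv ▸ ⟨a, ha⟩
  | succ n ih =>
    obtain ⟨p, hp⟩ := SimpleGraph.exists_isParent (by omega : G.dist r v ≠ 0)
    obtain ⟨b, hb⟩ := ih p (by have := hp.dist_eq; omega)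
    obtain ⟨t, ht, -⟩ := hP hp b hb
    exact ⟨t, ht⟩

/-- Each vertex at level `n + 1` takes a partner of its parent's section; the choice cannot
conflict because that parent is unique. -/
lemma IsDirArcConsistent.exists_extend_level (hG : G.IsAcyclic) (hP : D.IsDirArcConsistent r P)
    {n : ℕ} {s : ∀ v, D.B v} (hsP : ∀ v, s v ∈ P v)
    (hs : ∀ ⦃p c⦄ (h : G.IsParent r p c), G.dist r c ≤ n → D.Agree h.adj (s p) (s c)) :
    ∃ s' : ∀ v, D.B v, s' r = s r ∧ (∀ v, s' v ∈ P v) ∧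
      ∀ ⦃p c⦄ (h : G.IsParent r p c), G.dist r c ≤ n + 1 →
        D.Agree h.adj (s' p) (s' c) := by
  have hnext : ∀ c, G.dist r c = n + 1 →
      ∃ t ∈ P c, ∀ p (h : G.IsParent r p c), D.Agree h.adj (s p) t := by
    intro c hc
    obtain ⟨p, hp⟩ := SimpleGraph.exists_isParent (by omega : G.dist r c ≠ 0)
    obtain ⟨t, ht, hpt⟩ := hP hp (s p) (hsP p)
    refine ⟨t, ht, fun p' hp' => ?_⟩
    obtain rfl := hp'.unique hG hp
    exact hpt
  choose g hgP hg using hnext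
  refine ⟨fun v => if hv : G.dist r v = n + 1 then g v hv else s v, ?_, ?_, ?_⟩
  · simp
  · intro v
    dsimp only
    split_ifs with hv
    exacts [hgP v hv, hsP v]
  · intro p c h hc
    have hp : G.dist r p ≠ n + 1 := by have := h.dist_eq; omega
    by_cases hcn : G.dist r c = n + 1
    · simpa only [dif_neg hp, dif_pos hcn] using hg c hcn p h
    · simpa only [dif_neg hp, dif_neg hcn] using hs h (by omega)

theorem IsDirArcConsistent.exists_compatible [Fintype V] (hconn : G.Connected) (hG : G.IsAcyclic)
    (hP : D.IsDirArcConsistent r P) {a : D.B r} (ha : a ∈ P r) :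
    ∃ s : ∀ v, D.B v, D.Compatible s ∧ s r = a := by
  classical
  have hlevels : ∀ n, ∃ s : ∀ v, D.B v, s r = a ∧ (∀ v, s v ∈ P v) ∧
      ∀ ⦃p c⦄ (h : G.IsParent r p c), G.dist r c ≤ n → D.Agree h.adj (s p) (s c) := by
    intro n
    induction n with
    | zero =>
      choose s₀ hs₀ using hP.nonempty hconn ha
      refine ⟨Function.update s₀ r a, by simp, fun v => ?_, fun p c h hc => ?_⟩
      · rcases eq_or_ne v r with rfl | hv
        · simpa using ha
        · simpa [hv] using hs₀ v
      · have := h.dist_eq; omega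
    | succ n ih =>
      obtain ⟨s, hsr, hsP, hs⟩ := ih
      obtain ⟨s', hs'r, hs'⟩ := hP.exists_extend_level hG hsP hs
      exact ⟨s', hs'r.trans hsr, hs'⟩
  obtain ⟨s, hsr, -, hs⟩ := hlevels (Fintype.card V)
  refine ⟨s, fun x y h => ?_, hsr⟩
  have hdist : ∀ v, G.dist r v ≤ Fintype.card V := fun v => by
    obtain ⟨q, hq, hql⟩ := hconn.exists_path_of_dist r v
    exact hql ▸ hq.length_lt.le
  rcases hG.isParent_or_isParent (hconn r x) h with hxy | hyx
  · exact hs hxy (hdist y)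
  · exact (hs hyx (hdist x)).symm

end DecompSystem

section Filtering

variable {V : Type u} {G : SimpleGraph V} {D : DecompSystem G} {P : ∀ v, Set (D.B v)}

lemma filterStep_subset (x y v : V) : filterStep D x y P v ⊆ P v := fun _ ha => ha.1

lemma filterStep_of_ne {x y v : V} (hx : v ≠ x) (hy : v ≠ y) : filterStep D x y P v = P v :=
  Set.ext fun _ =>
    ⟨And.left, fun ha => ⟨ha, fun hv => absurd hv hx, fun hv => absurd hv hy⟩⟩

lemma exists_agree_of_mem_filterStep {x y : V} (h : G.Adj x y) {a : D.B x}
    (ha : a ∈ filterStep D x y P x) : ∃ b ∈ filterStep D x y P y, D.Agree h a b := by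
  obtain ⟨haP, hpartner, -⟩ := ha
  obtain ⟨b, hbP, hab⟩ := hpartner rfl h
  exact ⟨b, ⟨hbP, fun hyx => absurd hyx h.ne.symm, fun _ _ => ⟨a, haP, hab⟩⟩, hab⟩

lemma mem_filterStep_of_compatible {s : ∀ v, D.B v} (hs : D.Compatible s)
    (hsP : ∀ v, s v ∈ P v) (x y v : V) : s v ∈ filterStep D x y P v := by
  refine ⟨hsP v, fun hv h => ?_, fun hv h => ?_⟩
  · subst hv; exact ⟨s y, hsP y, hs h⟩
  · subst hv; exact ⟨s x, hsP x, hs h⟩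

lemma foldl_filterStep_subset (L : List (V × V)) (P : ∀ v, Set (D.B v)) (v : V) :
    L.foldl (fun P e => filterStep D e.1 e.2 P) P v ⊆ P v := by
  induction L generalizing P with
  | nil => exact subset_rfl
  | cons e L ih => exact (ih _).trans (filterStep_subset _ _ v)

lemma foldl_filterStep_of_forall_ne (L : List (V × V)) (P : ∀ v, Set (D.B v)) {v : V}
    (hL : ∀ e ∈ L, v ≠ e.1 ∧ v ≠ e.2) :
    L.foldl (fun P e => filterStep D e.1 e.2 P) P v = P v := by
  induction L generalizing P with
  | nil => rfl
  | cons e L ih =>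
    obtain ⟨h₁, h₂⟩ := hL e List.mem_cons_self
    exact (ih _ fun e' he' => hL e' (List.mem_cons_of_mem e he')).trans (filterStep_of_ne h₁ h₂)

lemma mem_foldl_filterStep_of_compatible {s : ∀ v, D.B v} (hs : D.Compatible s)
    (L : List (V × V)) (P : ∀ v, Set (D.B v)) (hsP : ∀ v, s v ∈ P v) (v : V) :
    s v ∈ L.foldl (fun P e => filterStep D e.1 e.2 P) P v := by
  induction L generalizing P with
  | nil => exact hsP v
  | cons e L ih => exact ih _ (mem_filterStep_of_compatible hs hsP e.1 e.2)

/-- The filter at `pc` gives every section at `p` a partner at `c`; later filters only shrink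
the bag at `p` and leave the bag at `c` alone. -/
theorem isDirArcConsistent_foldl_filterStep {r : V} (ℓ : List (V × V)) (P : ∀ v, Set (D.B v))
    (hℓ : ∀ ⦃p c⦄, G.IsParent r p c →
      ∃ L₁ L₂, ℓ = L₁ ++ (p, c) :: L₂ ∧ ∀ e ∈ L₂, c ≠ e.1 ∧ c ≠ e.2) :
    D.IsDirArcConsistent r (ℓ.foldl (fun P e => filterStep D e.1 e.2 P) P) := by
  intro p c h a ha
  obtain ⟨L₁, L₂, rfl, hL₂⟩ := hℓ h
  simp only [List.foldl_append, List.foldl_cons] at ha ⊢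
  rw [foldl_filterStep_of_forall_ne L₂ _ hL₂]
  exact exists_agree_of_mem_filterStep h.adj (foldl_filterStep_subset L₂ _ p ha)

end Filtering

section Schedule

variable {V : Type u} {G : SimpleGraph V} {r : V} {ℓ : List (V × V)}

lemma mem_of_isParent
    (horient : ∀ pc ∈ ℓ, G.Adj pc.1 pc.2 ∧ G.dist r pc.2 = G.dist r pc.1 + 1)
    (hcover : ∀ e : Sym2 V, e ∈ ℓ.map (fun pc => s(pc.1, pc.2)) ↔ e ∈ G.edgeSet)
    {p c : V} (h : G.IsParent r p c) : (p, c) ∈ ℓ := by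
  obtain ⟨e, he, hpc⟩ := List.mem_map.mp ((hcover s(p, c)).mpr h.adj)
  rcases Sym2.eq_iff.mp hpc with ⟨rfl, rfl⟩ | ⟨rfl, rfl⟩
  · exact he
  · have := (horient e he).2
    have := h.dist_eq
    omega

/-- An edge out of `c` leads below `c`, hence comes earlier; an edge into `c` is `pc` itself,
as `c` has only one parent. -/
lemma exists_eq_append_cons_of_isParent (hG : G.IsAcyclic)
    (horient : ∀ pc ∈ ℓ, G.Adj pc.1 pc.2 ∧ G.dist r pc.2 = G.dist r pc.1 + 1)
    (hnodup : (ℓ.map fun pc => s(pc.1, pc.2)).Nodup)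
    (hcover : ∀ e : Sym2 V, e ∈ ℓ.map (fun pc => s(pc.1, pc.2)) ↔ e ∈ G.edgeSet)
    (horder : ∀ i j : Fin ℓ.length,
      G.dist r (ℓ.get j).2 = G.dist r (ℓ.get i).2 + G.dist (ℓ.get i).2 (ℓ.get j).2 →
      (ℓ.get j).2 ≠ (ℓ.get i).2 → (j : ℕ) < (i : ℕ))
    {p c : V} (h : G.IsParent r p c) :
    ∃ L₁ L₂, ℓ = L₁ ++ (p, c) :: L₂ ∧ ∀ e ∈ L₂, c ≠ e.1 ∧ c ≠ e.2 := by
  obtain ⟨i, hi, hℓi⟩ := List.mem_iff_getElem.mp (mem_of_isParent horient hcover h)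
  refine ⟨ℓ.take i, ℓ.drop (i + 1), ?_, fun e he => ?_⟩
  · rw [← hℓi, List.getElem_cons_drop, List.take_append_drop]
  obtain ⟨k, hk, rfl⟩ := List.mem_drop_iff_getElem.mp he
  have hj : i + 1 + k < ℓ.length := by omega
  have hchild : G.IsParent r ℓ[i + 1 + k].1 ℓ[i + 1 + k].2 :=
    ⟨(horient _ (ℓ.getElem_mem hj)).1, (horient _ (ℓ.getElem_mem hj)).2⟩
  constructor
  · intro hc
    have hbelow := horder ⟨i, hi⟩ ⟨i + 1 + k, hj⟩
    simp only [List.get_eq_getElem, hℓi] at hbelow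
    have hdist := hchild.dist_eq
    rw [← hc] at hchild hdist
    have := hbelow (by rw [hdist, SimpleGraph.dist_eq_one_iff_adj.mpr hchild.adj])
      (by intro h'; rw [h'] at hdist; omega)
    omega
  · intro hc
    rw [← hc] at hchild
    have hp := hchild.unique hG h
    have := (hnodup.of_map _).getElem_inj_iff.mp (hℓi.trans (Prod.ext hp.symm hc)).symm
    omega

end Schedule

/-- Let `G` be a finite tree rooted at `r`, and let `ℓ` be a list of the edges
of `G` (oriented away from the root, each edge occurring exactly once) in any order such
that each edge appears only after all edges lying strictly below it, i.e. all edges of the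
subtree hanging from its endpoint farther from `r`. Then applying the edge filters along
`ℓ`, starting from the full bags, yields at the root exactly the set of sections extending
to a compatible family of the original system; in particular there is a compatible family
iff the final root bag is nonempty. -/
theorem stmt_9 {V : Type u} [Fintype V] {G : SimpleGraph V}
    (hconn : G.Connected) (hacyc : G.IsAcyclic) (r : V)
    (D : DecompSystem G) (ℓ : List (V × V))
    -- every entry of `ℓ` is an edge of `G`, oriented away from the root `r`
    (horient : ∀ pc ∈ ℓ, G.Adj pc.1 pc.2 ∧ G.dist r pc.2 = G.dist r pc.1 + 1)
    -- `ℓ` contains every edge of `G` exactly once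
    (hnodup : (ℓ.map fun pc => s(pc.1, pc.2)).Nodup)
    (hcover : ∀ e : Sym2 V, e ∈ ℓ.map (fun pc => s(pc.1, pc.2)) ↔ e ∈ G.edgeSet)
    -- each edge is processed only after all edges strictly below it: if the edge at
    -- position `j` lies in the subtree hanging from the far endpoint of the edge at
    -- position `i`, then `j < i`
    (horder : ∀ i j : Fin ℓ.length,
      G.dist r (ℓ.get j).2 = G.dist r (ℓ.get i).2 + G.dist (ℓ.get i).2 (ℓ.get j).2 →
      (ℓ.get j).2 ≠ (ℓ.get i).2 → (j : ℕ) < (i : ℕ)) :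
    (ℓ.foldl (fun P pc => filterStep D pc.1 pc.2 P) (fun v => (Set.univ : Set (D.B v)))) r =
      {b : D.B r | ∃ s : ∀ v, D.B v, D.Compatible s ∧ s r = b} := by
  have hconsistent : D.IsDirArcConsistent r
      (ℓ.foldl (fun P pc => filterStep D pc.1 pc.2 P) fun v => Set.univ) :=
    isDirArcConsistent_foldl_filterStep ℓ _ fun _ _ h =>
      exists_eq_append_cons_of_isParent hacyc horient hnodup hcover horder h
  ext b
  constructor
  · exact hconsistent.exists_compatible hconn hacyc
  · rintro ⟨s, hs, rfl⟩
    exact mem_foldl_filterStep_of_compatible hs ℓ _ (fun v => Set.mem_univ (s v)) r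
end

section
/- Let G be a finite simple graph and consider a decomposition system over G. Let x be a vertex whose bag is a singleton, B x = {ξ}. Let G' be the graph obtained from G by deleting all edges incident with x, and consider the decomposition system over G' that keeps the same adhesions and maps for the remaining edges and the same bags, except that for every vertex y joined to x in G by an edge e, the bag B y is replaced by {t ∈ B y | f y e t = f x e ξ}. Then the original system over G has a compatible family if and only if the reduced system over G' has a compatible family. -/
universe u

namespace DecompSystem

variable {V : Type u} {G : SimpleGraph V} (D : DecompSystem G)

theorem f_eq_f_swap {a b : V} (h : G.Adj a b) {ta : D.B a} {tb : D.B b}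
    (hab : D.f a s(a, b) ((G.mem_edgeSet).mpr h) (Sym2.mem_mk_left a b) ta =
      D.f b s(a, b) ((G.mem_edgeSet).mpr h) (Sym2.mem_mk_right a b) tb) :
    D.f b s(b, a) ((G.mem_edgeSet).mpr h.symm) (Sym2.mem_mk_left b a) tb =
      D.f a s(b, a) ((G.mem_edgeSet).mpr h.symm) (Sym2.mem_mk_right b a) ta := by
  convert hab.symm using 2 <;> rw [Sym2.eq_swap]

end DecompSystem

/-- Every family takes the value `ξ` at `x`, so compatibility across an edge `xy` of `G` is
exactly membership of `s y` in the cut-down bag, and the other edges of `G` are those of `G'`. -/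
theorem stmt_10 {V : Type u} {G : SimpleGraph V} (D : DecompSystem G)
    (x : V) (ξ : D.B x) (hsing : ∀ b : D.B x, b = ξ)
    (G' : SimpleGraph V) (hG'def : G' = G.deleteEdges (G.incidenceSet x)) (hle : G' ≤ G) :
    (∃ s : ∀ v, D.B v, D.Compatible s) ↔
    (∃ s : ∀ v, D.B v,
      (∀ ⦃a b : V⦄ (h : G'.Adj a b),
        D.f a s(a, b) ((G.mem_edgeSet).mpr (hle h)) (Sym2.mem_mk_left a b) (s a) =
        D.f b s(a, b) ((G.mem_edgeSet).mpr (hle h)) (Sym2.mem_mk_right a b) (s b)) ∧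
      (∀ (y : V) (h : G.Adj x y),
        D.f y s(x, y) ((G.mem_edgeSet).mpr h) (Sym2.mem_mk_right x y) (s y) =
        D.f x s(x, y) ((G.mem_edgeSet).mpr h) (Sym2.mem_mk_left x y) ξ)) := by
  constructor
  · rintro ⟨s, hs⟩
    exact ⟨s, fun a b h => hs (hle h), fun y h => hsing (s x) ▸ (hs h).symm⟩
  · rintro ⟨s, hs', hsx⟩
    refine ⟨s, fun a b h => ?_⟩
    obtain rfl | ha := eq_or_ne a x
    · exact hsing (s a) ▸ (hsx b h).symm
    obtain rfl | hb := eq_or_ne b x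
    · exact hsing (s b) ▸ D.f_eq_f_swap h.symm (hsx a h.symm).symm
    · exact hs' (hG'def ▸ SimpleGraph.deleteIncidenceSet_adj.mpr ⟨h, ha, hb⟩)
end

section
/- Let H and G be finite simple graphs, let (T, (X_t)_{t ∈ V(T)}) be a tree decomposition of H, and let (H, (Y_h)_{h ∈ V(H)}) be an H-decomposition of G. Then (T, (Z_t)_{t ∈ V(T)}) with Z_t = ⋃_{h ∈ X_t} Y_h is a tree decomposition of G. Moreover, if every bag X_t has at most a elements and every bag Y_h has at most b elements, then every bag Z_t has at most a · b elements. -/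
/-!
For a vertex `v` of `G`, the bags `Z_t` containing `v` are indexed by the union, over the
connected set of `h` with `v ∈ Y_h`, of the connected sets `{t | h ∈ X_t}`; two such sets for
adjacent `h, h'` meet because some bag of `X` contains the edge `hh'`. A union of connected sets
glued along a connected index graph in this way is connected. The size bound is the union bound.
-/

/-- An `H`-decomposition of `G`: bags indexed by the vertices of `H`, covering all vertices
and edges of `G`, such that for each vertex of `G` the set of bags containing it induces a
nonempty connected subgraph of `H`. -/
structure GraphDecomp {VH VG : Type*} (H : SimpleGraph VH) (G : SimpleGraph VG) where
  bag : VH → Set VG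
  cover_vert : ∀ v : VG, ∃ h, v ∈ bag h
  cover_edge : ∀ ⦃u v : VG⦄, G.Adj u v → ∃ h, u ∈ bag h ∧ v ∈ bag h
  coherent : ∀ v : VG, (H.induce {h : VH | v ∈ bag h}).Connected

namespace SimpleGraph

variable {V ι : Type*} {G : SimpleGraph V} {H : SimpleGraph ι}

theorem induce_biUnion_connected {S : Set ι} {A : ι → Set V} (hS : (H.induce S).Connected)
    (hA : ∀ i ∈ S, (G.induce (A i)).Connected)
    (hAdj : ∀ i ∈ S, ∀ j ∈ S, H.Adj i j → (A i ∩ A j).Nonempty) :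
    (G.induce (⋃ i ∈ S, A i)).Connected := by
  have hsub : ∀ i ∈ S, A i ⊆ ⋃ i ∈ S, A i := fun i hi => Set.subset_biUnion_of_mem hi
  have reach : ∀ i j (w : (H.induce S).Walk i j) x y (hx : x ∈ A i) (hy : y ∈ A j),
      (G.induce (⋃ i ∈ S, A i)).Reachable ⟨x, hsub i i.2 hx⟩ ⟨y, hsub j j.2 hy⟩ := by
    intro i j w
    induction w with
    | @nil k =>
      intro x y hx hy
      exact ((hA k k.2).preconnected ⟨x, hx⟩ ⟨y, hy⟩).map (induceHomOfLE G (hsub k k.2)).toHom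
    | @cons i k _ hik _ ih =>
      intro x y hx hy
      obtain ⟨z, hzi, hzk⟩ := hAdj i i.2 k k.2 hik
      exact (((hA i i.2).preconnected ⟨x, hx⟩ ⟨z, hzi⟩).map
        (induceHomOfLE G (hsub i i.2)).toHom).trans (ih z y hzk hy)
  obtain ⟨i⟩ := hS.nonempty
  obtain ⟨u, hu⟩ := (hA i i.2).nonempty
  refine G.induce_connected_of_patches u (hsub i i.2 hu) fun {v} hv => ?_
  obtain ⟨j, hj, hvj⟩ := Set.mem_iUnion₂.mp hv
  obtain ⟨w⟩ := hS.preconnected i ⟨j, hj⟩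
  exact ⟨_, subset_rfl, _, _, reach i ⟨j, hj⟩ w u v hu hvj⟩

end SimpleGraph

theorem Set.ncard_biUnion_le_mul {ι α : Type*} {t : Set ι} (ht : t.Finite) {s : ι → Set α}
    {a b : ℕ} (hta : t.ncard ≤ a) (hsb : ∀ i ∈ t, (s i).ncard ≤ b) :
    (⋃ i ∈ t, s i).ncard ≤ a * b := by
  lift t to Finset ι using ht
  calc (⋃ i ∈ (t : Set ι), s i).ncard ≤ ∑ i ∈ t, (s i).ncard := t.set_ncard_biUnion_le s
    _ ≤ t.card * b := Finset.sum_le_card_nsmul _ _ _ hsb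
    _ ≤ a * b := Nat.mul_le_mul_right b (by simpa using hta)

namespace GraphDecomp

variable {VT VH VG : Type*} {T : SimpleGraph VT} {H : SimpleGraph VH} {G : SimpleGraph VG}

def comp (X : GraphDecomp T H) (Y : GraphDecomp H G) : GraphDecomp T G where
  bag t := ⋃ h ∈ X.bag t, Y.bag h
  cover_vert v := by
    obtain ⟨h, hv⟩ := Y.cover_vert v
    obtain ⟨t, ht⟩ := X.cover_vert h
    exact ⟨t, Set.mem_biUnion ht hv⟩
  cover_edge u v huv := by
    obtain ⟨h, hu, hv⟩ := Y.cover_edge huv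
    obtain ⟨t, ht⟩ := X.cover_vert h
    exact ⟨t, Set.mem_biUnion ht hu, Set.mem_biUnion ht hv⟩
  coherent v := by
    have hbags : {t | v ∈ ⋃ h ∈ X.bag t, Y.bag h} =
        ⋃ h ∈ {h | v ∈ Y.bag h}, {t | h ∈ X.bag t} := by
      ext t
      simp [and_comm]
    rw [hbags]
    exact SimpleGraph.induce_biUnion_connected (Y.coherent v) (fun h _ => X.coherent h)
      fun _ _ _ _ hh' => X.cover_edge hh'

end GraphDecomp

theorem stmt_11_general {VT VH VG : Type*} [Fintype VH]
    (T : SimpleGraph VT)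
    (H : SimpleGraph VH) (G : SimpleGraph VG)
    (X : GraphDecomp T H) (Y : GraphDecomp H G) :
    (∃ Z : GraphDecomp T G, Z.bag = fun t => ⋃ h ∈ X.bag t, Y.bag h) ∧
    ∀ a b : ℕ, (∀ t, (X.bag t).ncard ≤ a) → (∀ h, (Y.bag h).ncard ≤ b) →
      ∀ t, (⋃ h ∈ X.bag t, Y.bag h).ncard ≤ a * b :=
  ⟨⟨X.comp Y, rfl⟩, fun _ _ hX hY t =>
    Set.ncard_biUnion_le_mul (Set.toFinite _) (hX t) fun h _ => hY h⟩

/-- Composing a tree decomposition `X` of `H` with an `H`-decomposition `Y` of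
`G` by taking unions of bags yields a tree decomposition of `G`, whose bags have at most
`a * b` elements whenever the bags of `X` (resp. `Y`) have at most `a` (resp. `b`) elements. -/
theorem stmt_11 {VT VH VG : Type*} [Fintype VH] [Fintype VG]
    (T : SimpleGraph VT) (hTconn : T.Connected) (hTacyc : T.IsAcyclic)
    (H : SimpleGraph VH) (G : SimpleGraph VG)
    (X : GraphDecomp T H) (Y : GraphDecomp H G) :
    (∃ Z : GraphDecomp T G, Z.bag = fun t => ⋃ h ∈ X.bag t, Y.bag h) ∧
    ∀ a b : ℕ, (∀ t, (X.bag t).ncard ≤ a) → (∀ h, (Y.bag h).ncard ≤ b) →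
      ∀ t, (⋃ h ∈ X.bag t, Y.bag h).ncard ≤ a * b :=
  stmt_11_general T H G X Y
end

section
/- Let G be a finite simple graph and let S be a feedback vertex set of G, i.e. a set of vertices such that the induced subgraph of G on the complement of S is acyclic. Then G admits a tree decomposition in which every bag has at most |S| + 2 vertices. -/
namespace SimpleGraph

section ParentMap

variable {X : Type*} {π : X → X} (f : X → ℕ)

lemma eq_of_fromRel_adj_of_rank_le (hf : ∀ x, π x ≠ x → f (π x) < f x) {x y : X}
    (hxy : (fromRel fun x y => π x = y).Adj x y) (hle : f y ≤ f x) : π x = y := by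
  obtain ⟨hne, h | h⟩ := hxy
  · exact h
  · have := hf y (by rwa [h])
    rw [h] at this
    omega

theorem isAcyclic_fromRel_of_rank_lt (hf : ∀ x, π x ≠ x → f (π x) < f x) :
    (fromRel fun x y => π x = y).IsAcyclic := by
  classical
  intro a c hc
  obtain ⟨m, hm, hmax⟩ :=
    Set.exists_max_image {x | x ∈ c.support} f c.support.finite_toSet ⟨a, c.start_mem_support⟩
  -- Rotated to start at a vertex `m` of maximal rank, the cycle leaves and re-enters `m` through
  -- its parent `π m`.
  have hc' := hc.rotate hm
  have hnil := hc'.not_nil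
  have hsnd := eq_of_fromRel_adj_of_rank_le f hf (Walk.adj_snd hnil)
    (hmax _ ((c.mem_support_rotate_iff m hm).1 (Walk.getVert_mem_support _ _)))
  have hpen := eq_of_fromRel_adj_of_rank_le f hf (Walk.adj_penultimate hnil).symm
    (hmax _ ((c.mem_support_rotate_iff m hm).1 (Walk.getVert_mem_support _ _)))
  exact hc'.snd_ne_penultimate (hsnd.symm.trans hpen)

theorem reachable_fromRel_of_rank_lt (hf : ∀ x, π x ≠ x → f (π x) < f x) {r : X}
    (hr : ∀ x, π x = x → x = r) (x : X) : (fromRel fun x y => π x = y).Reachable x r := by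
  induction hx : f x using Nat.strong_induction_on generalizing x with
  | _ n ih =>
    by_cases hfix : π x = x
    · rw [hr x hfix]
    · exact (Adj.reachable ((fromRel_adj _ _ _).2 ⟨Ne.symm hfix, Or.inl rfl⟩)).trans
        (ih _ (hx ▸ hf x hfix) _ rfl)

theorem isTree_fromRel_of_rank_lt (hf : ∀ x, π x ≠ x → f (π x) < f x) {r : X}
    (hr : ∀ x, π x = x → x = r) : (fromRel fun x y => π x = y).IsTree where
  connected := have : Nonempty X := ⟨r⟩
    .mk fun x y => (reachable_fromRel_of_rank_lt f hf hr x).trans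
      (reachable_fromRel_of_rank_lt f hf hr y).symm
  isAcyclic := isAcyclic_fromRel_of_rank_lt f hf

end ParentMap

lemma connected_induce_of_forall_adj {X : Type*} {G : SimpleGraph X} {s : Set X} {c : X}
    (hc : c ∈ s) (hs : ∀ x ∈ s, x ≠ c → G.Adj x c) : (G.induce s).Connected := by
  have : Nonempty s := ⟨⟨c, hc⟩⟩
  have reach (x : s) : (G.induce s).Reachable x ⟨c, hc⟩ := by
    by_cases hx : (x : X) = c
    · obtain rfl : x = ⟨c, hc⟩ := Subtype.ext hx
      rfl
    · exact Adj.reachable (induce_adj.2 (hs x x.2 hx))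
  exact .mk fun x y => (reach x).trans (reach y).symm

section RootedForest

variable {W : Type*} (F : SimpleGraph W)

noncomputable def componentRoot (w : W) : W := (F.connectedComponentMk w).out

lemma reachable_componentRoot (w : W) : F.Reachable w (F.componentRoot w) :=
  ConnectedComponent.exact (F.connectedComponentMk w).out_eq |>.symm

lemma componentRoot_eq_of_adj {a b : W} (h : F.Adj a b) :
    F.componentRoot a = F.componentRoot b := by
  rw [componentRoot, componentRoot, ConnectedComponent.sound h.reachable]

open Classical in
noncomputable def rootPath (w : W) : F.Walk w (F.componentRoot w) :=
  (F.reachable_componentRoot w).some.bypass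

lemma isPath_rootPath (w : W) : (F.rootPath w).IsPath := by
  classical
  exact Walk.bypass_isPath _

noncomputable def depth (w : W) : ℕ := (F.rootPath w).length

-- The next vertex on the path to the root; a root is its own parent.
noncomputable def parent (w : W) : W := (F.rootPath w).snd

lemma not_nil_rootPath {w : W} (h : F.parent w ≠ w) : ¬(F.rootPath w).Nil := fun hnil =>
  h <| ((F.rootPath w).getVert_of_length_le (by simp [Walk.length_eq_zero_iff.2 hnil])).trans
    hnil.eq.symm

lemma adj_parent {w : W} (h : F.parent w ≠ w) : F.Adj w (F.parent w) :=
  Walk.adj_snd (F.not_nil_rootPath h)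

variable {F}

lemma IsAcyclic.rootPath_eq (hF : F.IsAcyclic) {w : W} (p : F.Walk w (F.componentRoot w))
    (hp : p.IsPath) : F.rootPath w = p :=
  congrArg Subtype.val ((hF.subsingleton_path _ _).elim ⟨_, F.isPath_rootPath w⟩ ⟨p, hp⟩)

lemma IsAcyclic.depth_eq_length (hF : F.IsAcyclic) {w r : W} (hr : F.componentRoot w = r)
    (p : F.Walk w r) (hp : p.IsPath) : F.depth w = p.length := by
  subst hr
  rw [depth, hF.rootPath_eq p hp]

lemma IsAcyclic.parent_eq_snd (hF : F.IsAcyclic) {w r : W} (hr : F.componentRoot w = r)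
    (p : F.Walk w r) (hp : p.IsPath) : F.parent w = p.snd := by
  subst hr
  rw [parent, hF.rootPath_eq p hp]

lemma IsAcyclic.depth_parent_lt (hF : F.IsAcyclic) {w : W} (h : F.parent w ≠ w) :
    F.depth (F.parent w) < F.depth w := by
  have hroot := F.componentRoot_eq_of_adj (F.adj_parent h)
  rw [hF.depth_eq_length hroot.symm _ (F.isPath_rootPath w).tail, depth,
    ← Walk.length_tail_add_one (F.not_nil_rootPath h)]
  exact Nat.lt_succ_self _

lemma IsAcyclic.parent_eq_or_of_adj (hF : F.IsAcyclic) {a b : W} (hab : F.Adj a b) :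
    F.parent a = b ∨ F.parent b = a := by
  by_cases hb : b ∈ (F.rootPath a).support
  · exact .inl (hF.eq_snd_of_adj_start (F.isPath_rootPath a) hab hb).symm
  · refine .inr ?_
    rw [hF.parent_eq_snd (F.componentRoot_eq_of_adj hab).symm (.cons hab.symm (F.rootPath a))
      ((Walk.cons_isPath_iff _ _).2 ⟨F.isPath_rootPath a, hb⟩)]
    exact Walk.snd_cons _ _

end RootedForest

section ApexTree

variable {W : Type*} (F : SimpleGraph W)

-- `none` is a new vertex, joined to the chosen root of every component of `F`.
open Classical in
noncomputable def apexParent : Option W → Option W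
  | none => none
  | some w => if F.parent w = w then none else some (F.parent w)

noncomputable def apexTree : SimpleGraph (Option W) := fromRel fun x y => F.apexParent x = y

lemma apexTree_adj_parent {w : W} (h : F.parent w ≠ w) :
    F.apexTree.Adj (some w) (some (F.parent w)) :=
  (fromRel_adj _ _ _).2 ⟨by simpa using Ne.symm h, .inl (by simp [apexParent, h])⟩

variable {F}

theorem IsAcyclic.isTree_apexTree (hF : F.IsAcyclic) : F.apexTree.IsTree := by
  refine isTree_fromRel_of_rank_lt (fun x => x.elim 0 (F.depth · + 1)) ?_ (r := none) ?_
  · rintro (_ | w) hw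
    · exact absurd rfl hw
    · by_cases h : F.parent w = w
      · simp [apexParent, h]
      · simpa [apexParent, h] using hF.depth_parent_lt h
  · rintro (_ | w) hw
    · rfl
    · by_cases h : F.parent w = w <;> simp [apexParent, h] at hw

noncomputable def IsAcyclic.treeDecomp (hF : F.IsAcyclic) : GraphDecomp F.apexTree F where
  bag x := x.elim ∅ fun w => {w, F.parent w}
  cover_vert w := ⟨some w, by simp⟩
  cover_edge a b hab := (hF.parent_eq_or_of_adj hab).elim
    (fun h => ⟨some a, by simp [h]⟩) (fun h => ⟨some b, by simp [h]⟩)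
  coherent w := by
    refine connected_induce_of_forall_adj (c := some w) (by simp) ?_
    rintro (_ | u) hu hne
    · simp at hu
    · obtain rfl | rfl : w = u ∨ w = F.parent u := by simpa using hu
      · exact absurd rfl hne
      · exact F.apexTree_adj_parent (fun h => hne (by rw [h]))

lemma IsAcyclic.ncard_bag_treeDecomp_le (hF : F.IsAcyclic) (x : Option W) :
    (hF.treeDecomp.bag x).ncard ≤ 2 := by
  rcases x with _ | w
  · simp [treeDecomp]
  · exact (Set.ncard_insert_le _ _).trans (by simp)

end ApexTree
end SimpleGraph

namespace GraphDecomp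

variable {VH VG : Type*} {H : SimpleGraph VH} {G : SimpleGraph VG} {S : Set VG}

def ofInduceCompl (hH : H.Connected) (D : GraphDecomp H (G.induce Sᶜ)) : GraphDecomp H G :=
  have mem_bag {v : VG} (hv : v ∉ S) (h : VH) :
      v ∈ S ∪ Subtype.val '' D.bag h ↔ ⟨v, hv⟩ ∈ D.bag h := by
    simp [hv]
  have exists_mem_bag (v : VG) : ∃ h, v ∈ S ∪ Subtype.val '' D.bag h := by
    by_cases hv : v ∈ S
    · exact ⟨hH.nonempty.some, .inl hv⟩
    · simpa only [mem_bag hv] using D.cover_vert ⟨v, hv⟩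
  { bag h := S ∪ Subtype.val '' D.bag h
    cover_vert := exists_mem_bag
    cover_edge u v huv := by
      by_cases hu : u ∈ S
      · exact (exists_mem_bag v).imp fun _ hv => ⟨.inl hu, hv⟩
      by_cases hv : v ∈ S
      · exact (exists_mem_bag u).imp fun _ hu => ⟨hu, .inl hv⟩
      simpa only [mem_bag hu, mem_bag hv] using
        D.cover_edge (u := ⟨u, hu⟩) (v := ⟨v, hv⟩) huv
    coherent v := by
      by_cases hv : v ∈ S
      · rw [show {h | v ∈ S ∪ Subtype.val '' D.bag h} = Set.univ from
          Set.eq_univ_of_forall fun _ => .inl hv]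
        exact (SimpleGraph.induceUnivIso H).connected_iff.2 hH
      · rw [show {h | v ∈ S ∪ Subtype.val '' D.bag h} = {h | ⟨v, hv⟩ ∈ D.bag h} from
          Set.ext (mem_bag hv)]
        exact D.coherent ⟨v, hv⟩ }

lemma ncard_bag_ofInduceCompl_le (hH : H.Connected) (D : GraphDecomp H (G.induce Sᶜ)) (h : VH) :
    ((D.ofInduceCompl hH).bag h).ncard ≤ S.ncard + (D.bag h).ncard :=
  (Set.ncard_union_le _ _).trans_eq
    (by rw [Set.ncard_image_of_injective _ Subtype.val_injective])

end GraphDecomp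

theorem stmt_13_general {V : Type} (G : SimpleGraph V) (S : Set V)
    (hS : (G.induce Sᶜ).IsAcyclic) :
    ∃ (VT : Type) (T : SimpleGraph VT), T.Connected ∧ T.IsAcyclic ∧
      ∃ D : GraphDecomp T G, ∀ t, (D.bag t).ncard ≤ S.ncard + 2 := by
  obtain ⟨hconn, hacyc⟩ := hS.isTree_apexTree
  refine ⟨_, _, hconn, hacyc, hS.treeDecomp.ofInduceCompl hconn, fun t => ?_⟩
  calc _ ≤ S.ncard + (hS.treeDecomp.bag t).ncard := GraphDecomp.ncard_bag_ofInduceCompl_le ..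
    _ ≤ S.ncard + 2 := by grw [hS.ncard_bag_treeDecomp_le t]

/-- If `S` is a feedback vertex set of a finite simple graph `G` (the induced
subgraph on the complement of `S` is acyclic), then `G` admits a tree decomposition all of
whose bags have at most `|S| + 2` vertices. -/
theorem stmt_13 {V : Type} [Fintype V] (G : SimpleGraph V) (S : Set V)
    (hS : (G.induce Sᶜ).IsAcyclic) :
    ∃ (VT : Type) (T : SimpleGraph VT), T.Connected ∧ T.IsAcyclic ∧
      ∃ D : GraphDecomp T G, ∀ t, (D.bag t).ncard ≤ S.ncard + 2 :=
  stmt_13_general G S hS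
end
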